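/- arXiv:2207.11743 — 3 statements merged into one kernel-verified Lean document; each statement's English description precedes it below -/
import Mathlib

section
/- Fix λ ≥ 2 and set a = (λ − 1 − √((λ−1)² − 1))/2 ≥ 0. With X_n(λ) = det(λ I_n − B_n^s) (and X_1(λ) = λ − 2), for every n ≥ 3 one has X_n(λ) − a X_{n−1}(λ) = (λ − 1 − a)(X_{n−1}(λ) − a X_{n−2}(λ)), and consequently X_n(λ) = a X_{n−1}(λ) + (λ − 1 − a)^{n−2} (X_2(λ) − a X_1(λ)) for every n ≥ 2. -/
open Matrix Real

noncomputable def bS (n : ℕ) : Matrix (Fin n) (Fin n) ℝ := fun i j =>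
  if i = j then (if (i : ℕ) = n - 1 then 2 else 1)
  else if (i : ℕ) + 1 = (j : ℕ) ∨ (j : ℕ) + 1 = (i : ℕ) then
    (if (i : ℕ) = n - 1 ∨ (j : ℕ) = n - 1 then -1 else -1/2)
  else 0

noncomputable def X (n : ℕ) (l : ℝ) : ℝ :=
  (l • (1 : Matrix (Fin n) (Fin n) ℝ) - bS n).det

lemma bS_shift (n : ℕ) (i j : Fin n) : bS (n+1) i.succ j.succ = bS n i j := by
  have hi := i.isLt; have hj := j.isLt
  simp only [bS, Fin.val_succ, Fin.succ_inj, Nat.add_sub_cancel]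
  split_ifs <;> first | rfl | omega

lemma sub_shift (l : ℝ) (n : ℕ) :
    (l • (1 : Matrix (Fin (n+1)) (Fin (n+1)) ℝ) - bS (n+1)).submatrix Fin.succ Fin.succ
      = l • (1 : Matrix (Fin n) (Fin n) ℝ) - bS n := by
  ext i j
  simp [Matrix.submatrix_apply, Matrix.sub_apply, Matrix.smul_apply, Matrix.one_apply,
    Fin.succ_inj, bS_shift]

lemma A_apply (l : ℝ) (n : ℕ) (i j : Fin n) :
    (l • (1 : Matrix (Fin n) (Fin n) ℝ) - bS n) i j
      = (if i = j then l else 0) - bS n i j := by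
  simp [Matrix.sub_apply, Matrix.smul_apply, Matrix.one_apply, mul_ite]

lemma bS_far (n : ℕ) (i j : Fin n) (h1 : (i:ℕ) ≠ (j:ℕ))
    (h2 : (i:ℕ) + 1 ≠ (j:ℕ)) (h3 : (j:ℕ) + 1 ≠ (i:ℕ)) : bS n i j = 0 := by
  have : i ≠ j := fun h => h1 (by rw [h])
  simp only [bS, if_neg this]
  rw [if_neg (by tauto)]

lemma bS_adj (n : ℕ) (i j : Fin n) (h1 : (i:ℕ) + 1 = (j:ℕ) ∨ (j:ℕ) + 1 = (i:ℕ))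
    (h2 : ¬((i:ℕ) = n - 1 ∨ (j:ℕ) = n - 1)) : bS n i j = -1/2 := by
  have : i ≠ j := by
    intro h; subst h; omega
  simp only [bS, if_neg this, if_pos h1, if_neg h2]

lemma X_rec (l : ℝ) (n : ℕ) (hn : 1 ≤ n) :
    X (n+2) l = (l-1) * X (n+1) l - (1/4) * X n l := by
  have hfar : ∀ i j : Fin (n+2), (i:ℕ) ≠ (j:ℕ) → (i:ℕ) + 1 ≠ (j:ℕ) →
      (j:ℕ) + 1 ≠ (i:ℕ) →
      (l • (1 : Matrix (Fin (n+2)) (Fin (n+2)) ℝ) - bS (n+2)) i j = 0 := by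
    intro i j h1 h2 h3
    rw [A_apply, bS_far _ _ _ h1 h2 h3, if_neg (fun h => h1 (by rw [h])), sub_zero]
  have hadj : ∀ i j : Fin (n+2), ((i:ℕ) + 1 = (j:ℕ) ∨ (j:ℕ) + 1 = (i:ℕ)) →
      (i:ℕ) ≠ n + 1 → (j:ℕ) ≠ n + 1 →
      (l • (1 : Matrix (Fin (n+2)) (Fin (n+2)) ℝ) - bS (n+2)) i j = 1/2 := by
    intro i j h1 h2 h3
    rw [A_apply, bS_adj _ _ _ h1 (by omega),
      if_neg (by intro h; rw [h] at h1; omega)]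
    norm_num
  have h00 : (l • (1 : Matrix (Fin (n+2)) (Fin (n+2)) ℝ) - bS (n+2)) 0 0 = l - 1 := by
    rw [A_apply, if_pos rfl]
    have h : ((0 : Fin (n+2)) : ℕ) ≠ n + 2 - 1 := by simp only [Fin.val_zero]; omega
    have hb : bS (n+2) 0 0 = 1 := by simp [bS, h]
    rw [hb]
  have h01 : (l • (1 : Matrix (Fin (n+2)) (Fin (n+2)) ℝ) - bS (n+2)) 0 (Fin.succ 0)
      = 1/2 := by
    apply hadj <;> simp <;> omega
  have h10 : (l • (1 : Matrix (Fin (n+2)) (Fin (n+2)) ℝ) - bS (n+2)) (Fin.succ 0) 0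
      = 1/2 := by
    apply hadj <;> simp <;> omega
  have hM0 : ((l • (1 : Matrix (Fin (n+2)) (Fin (n+2)) ℝ) - bS (n+2)).submatrix
      Fin.succ (Fin.succAbove 0)).det = X (n+1) l := by
    rw [Fin.succAbove_zero, sub_shift]
    rfl
  have hsa0 : (Fin.succ 0 : Fin (n+2)).succAbove 0 = 0 := by
    rw [Fin.succAbove_of_castSucc_lt]
    · rfl
    · simp [Fin.lt_def]
  have hsas : ∀ j : Fin n, (Fin.succ 0 : Fin (n+2)).succAbove j.succ = j.succ.succ := by
    intro j
    rw [Fin.succAbove_of_le_castSucc]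
    simp [Fin.le_def]
  have hBminor : (((l • (1 : Matrix (Fin (n+2)) (Fin (n+2)) ℝ) - bS (n+2)).submatrix
      Fin.succ (Fin.succ 0 : Fin (n+2)).succAbove).submatrix
      (Fin.succAbove 0) Fin.succ).det = X n l := by
    rw [Fin.succAbove_zero]
    have heq : ((l • (1 : Matrix (Fin (n+2)) (Fin (n+2)) ℝ) - bS (n+2)).submatrix
        Fin.succ (Fin.succ 0 : Fin (n+2)).succAbove).submatrix Fin.succ Fin.succ
        = l • (1 : Matrix (Fin n) (Fin n) ℝ) - bS n := by
      ext i j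
      rw [Matrix.submatrix_apply, Matrix.submatrix_apply, hsas, A_apply, A_apply]
      have e1 : bS (n+2) i.succ.succ j.succ.succ = bS n i j :=
        (bS_shift (n+1) i.succ j.succ).trans (bS_shift n i j)
      rw [e1]
      simp only [Fin.succ_inj]
    rw [heq]; rfl
  have hM1 : ((l • (1 : Matrix (Fin (n+2)) (Fin (n+2)) ℝ) - bS (n+2)).submatrix
      Fin.succ (Fin.succ 0 : Fin (n+2)).succAbove).det = (1/2) * X n l := by
    rw [det_succ_column_zero, Fin.sum_univ_succ]
    rw [Finset.sum_eq_zero (fun i _ => by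
      rw [Matrix.submatrix_apply, hsa0,
        hfar i.succ.succ 0 (by simp) (by simp) (by simp)]
      ring)]
    rw [Matrix.submatrix_apply, hsa0, h10, hBminor]
    simp
  rw [X, det_succ_row_zero, Fin.sum_univ_succ, Fin.sum_univ_succ]
  rw [Finset.sum_eq_zero (fun j _ => by
    rw [hfar 0 j.succ.succ (by simp) (by simp) (by simp)]; ring)]
  rw [h00, h01, hM0, hM1]
  simp
  ring

/-- for λ ≥ 2 and a = (λ − 1 − √((λ−1)² − 1))/2 one has a ≥ 0,
Xₙ − a Xₙ₋₁ = (λ−1−a)(Xₙ₋₁ − a Xₙ₋₂) for n ≥ 3, and consequently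
Xₙ = a Xₙ₋₁ + (λ−1−a)^(n−2) (X₂ − a X₁) for n ≥ 2. -/
theorem stmt12 (l : ℝ) (hl : 2 ≤ l) (a : ℝ)
    (ha : a = (l - 1 - Real.sqrt ((l - 1) ^ 2 - 1)) / 2) :
    0 ≤ a ∧
    (∀ n : ℕ, 3 ≤ n →
      X n l - a * X (n - 1) l = (l - 1 - a) * (X (n - 1) l - a * X (n - 2) l)) ∧
    (∀ n : ℕ, 2 ≤ n →
      X n l = a * X (n - 1) l + (l - 1 - a) ^ (n - 2) * (X 2 l - a * X 1 l)) := by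
  have hs : Real.sqrt ((l-1)^2 - 1) ≤ l - 1 := by
    calc Real.sqrt ((l-1)^2 - 1) ≤ Real.sqrt ((l-1)^2) := Real.sqrt_le_sqrt (by nlinarith)
    _ = l - 1 := Real.sqrt_sq (by linarith)
  have ha0 : 0 ≤ a := by rw [ha]; linarith
  have hsq : Real.sqrt ((l-1)^2 - 1) ^ 2 = (l-1)^2 - 1 :=
    Real.sq_sqrt (by nlinarith)
  have hkey : a * (l - 1 - a) = 1/4 := by
    rw [ha]; linear_combination (-(1:ℝ)/4) * hsq
  refine ⟨ha0, ?_, ?_⟩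
  · intro n hn
    obtain ⟨m, rfl⟩ : ∃ m, n = m + 3 := ⟨n - 3, by omega⟩
    show X (m+3) l - a * X (m+2) l = (l - 1 - a) * (X (m+2) l - a * X (m+1) l)
    have h := X_rec l (m+1) (by omega)
    linear_combination h + X (m+1) l * hkey
  · intro n hn
    obtain ⟨m, rfl⟩ : ∃ m, n = m + 2 := ⟨n - 2, by omega⟩
    clear hn
    show X (m+2) l = a * X (m+1) l + (l - 1 - a) ^ m * (X 2 l - a * X 1 l)
    induction m with
    | zero => simp
    | succ k ih =>
      have h := X_rec l (k+1) (by omega)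
      linear_combination h + X (k+1) l * hkey + (l - 1 - a) * ih
end

section
/- For every n ≥ 2, the spectral radius of B_n^s satisfies ρ(B_n^s) < 3; equivalently, det(λ I_n − B_n^s) > 0 for every λ ≥ 3. -/
/-!
The matrix `bS n` is symmetric, so `ρ(bS n) < 3` and `det (l • 1 - bS n) > 0` for `l ≥ 3` both
follow once every real eigenvalue `μ` satisfies `|μ| ≤ 14/5`. That bound is Gershgorin's theorem
applied to `D⁻¹ (bS n) D`, where `D` is diagonal with entry `5/4` in the last position and `1`
elsewhere: plain Gershgorin only gives `|μ| ≤ 3`, because the last row has diagonal entry `2`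
and off-diagonal mass `1`, and the weight moves part of that mass onto the penultimate row,
which has room to spare.
-/

open Matrix Real

def eigenAbsSet {n : ℕ} (A : Matrix (Fin n) (Fin n) ℝ) : Set ℝ :=
  {r : ℝ | ∃ μ : ℝ, (μ • (1 : Matrix (Fin n) (Fin n) ℝ) - A).det = 0 ∧ r = |μ|}

noncomputable def specRad {n : ℕ} (A : Matrix (Fin n) (Fin n) ℝ) : ℝ :=
  sSup (eigenAbsSet A)

open Finset

theorem Finset.sum_ite_const_le_of_subsingleton {ι : Type*} [Fintype ι] (p : ι → Prop)
    [DecidablePred p] {c : ℝ} (hc : 0 ≤ c) (hp : ∀ a b, p a → p b → a = b) :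
    ∑ j, (if p j then c else 0) ≤ c := by
  rw [← sum_filter, Finset.sum_const, nsmul_eq_mul]
  have hcard : (#(univ.filter p) : ℝ) ≤ 1 := by
    exact_mod_cast card_le_one.mpr fun a ha b hb => hp a b (mem_filter.mp ha).2 (mem_filter.mp hb).2
  exact mul_le_of_le_one_left hc hcard

theorem Fin.sum_erase_le_of_le_neighbors {n : ℕ} (k : Fin n) {f : Fin n → ℝ} {L R : ℝ}
    (hL : 0 ≤ L) (hR : 0 ≤ R)
    (hf : ∀ j ≠ k, f j ≤ (if (j : ℕ) + 1 = k then L else 0) + (if (k : ℕ) + 1 = j then R else 0)) :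
    ∑ j ∈ univ.erase k, f j ≤ L + R := by
  set g : Fin n → ℝ :=
    fun j => (if (j : ℕ) + 1 = k then L else 0) + (if (k : ℕ) + 1 = j then R else 0)
  have hg : ∀ j, 0 ≤ g j := fun j => by simp only [g]; split_ifs <;> linarith
  calc ∑ j ∈ univ.erase k, f j
      ≤ ∑ j ∈ univ.erase k, g j := sum_le_sum fun j hj => hf j (ne_of_mem_erase hj)
    _ ≤ ∑ j, g j := sum_le_sum_of_subset_of_nonneg (erase_subset k univ) fun j _ _ => hg j
    _ ≤ L + R := by
      rw [sum_add_distrib]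
      gcongr
      · exact sum_ite_const_le_of_subsingleton _ hL fun a b ha hb => Fin.ext (by omega)
      · exact sum_ite_const_le_of_subsingleton _ hR fun a b ha hb => Fin.ext (by omega)

namespace Matrix

variable {K ι : Type*} [Fintype ι] [DecidableEq ι]

theorem mem_spectrum_iff_det_smul_one_sub_eq_zero [Field K] {A : Matrix ι ι K} {μ : K} :
    μ ∈ spectrum K A ↔ (μ • (1 : Matrix ι ι K) - A).det = 0 := by
  rw [spectrum.mem_iff, Algebra.algebraMap_eq_smul_one, isUnit_iff_isUnit_det, isUnit_iff_ne_zero,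
    not_not]

theorem IsHermitian.det_pos_of_spectrum_pos {A : Matrix ι ι ℝ} (hA : A.IsHermitian)
    (h : ∀ μ ∈ spectrum ℝ A, 0 < μ) : 0 < A.det := by
  rw [hA.det_eq_prod_eigenvalues]
  exact prod_pos fun i _ => h _ (hA.eigenvalues_mem_spectrum_real i)

variable [NormedField K]

theorem det_ne_zero_of_weighted_sum_row_lt_diag {A : Matrix ι ι K} (d : ι → K)
    (h : ∀ k, ∑ j ∈ univ.erase k, ‖A k j‖ * ‖d j‖ < ‖A k k‖ * ‖d k‖) : A.det ≠ 0 := by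
  have hAd : (A * diagonal d).det ≠ 0 :=
    det_ne_zero_of_sum_row_lt_diag (by simpa only [mul_diagonal, norm_mul] using h)
  rw [det_mul] at hAd
  exact left_ne_zero_of_mul hAd

theorem norm_le_of_mem_spectrum_of_weighted_row_sum_le {A : Matrix ι ι K} (d : ι → K)
    (hd : ∀ i, d i ≠ 0) {c : ℝ}
    (h : ∀ k, ‖A k k‖ * ‖d k‖ + ∑ j ∈ univ.erase k, ‖A k j‖ * ‖d j‖ ≤ c * ‖d k‖)
    {μ : K} (hμ : μ ∈ spectrum K A) : ‖μ‖ ≤ c := by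
  by_contra! hc
  refine det_ne_zero_of_weighted_sum_row_lt_diag d (fun k => ?_)
    (mem_spectrum_iff_det_smul_one_sub_eq_zero.mp hμ)
  have hoff : ∀ j ∈ univ.erase k, ‖(μ • (1 : Matrix ι ι K) - A) k j‖ = ‖A k j‖ := by
    intro j hj
    simp [one_apply_ne' (ne_of_mem_erase hj)]
  have hdk : 0 < ‖d k‖ := norm_pos_iff.mpr (hd k)
  calc ∑ j ∈ univ.erase k, ‖(μ • (1 : Matrix ι ι K) - A) k j‖ * ‖d j‖
      = ∑ j ∈ univ.erase k, ‖A k j‖ * ‖d j‖ := sum_congr rfl fun j hj => by rw [hoff j hj]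
    _ ≤ (c - ‖A k k‖) * ‖d k‖ := by linarith [h k]
    _ < (‖μ‖ - ‖A k k‖) * ‖d k‖ := by gcongr
    _ ≤ ‖(μ • (1 : Matrix ι ι K) - A) k k‖ * ‖d k‖ := by
      gcongr
      simpa using norm_sub_norm_le μ (A k k)

end Matrix

theorem bS_isHermitian (n : ℕ) : (bS n).IsHermitian := by
  ext i j
  simp only [conjTranspose_apply, star_trivial, bS, eq_comm (a := i)]
  split_ifs <;> first | rfl | omega

noncomputable def bSWeight (n : ℕ) (j : Fin n) : ℝ := if (j : ℕ) = n - 1 then 5 / 4 else 1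

theorem bSWeight_pos (n : ℕ) (j : Fin n) : 0 < bSWeight n j := by
  unfold bSWeight
  split_ifs <;> norm_num

theorem bS_weighted_row_sum_le (n : ℕ) (k : Fin n) :
    ‖bS n k k‖ * ‖bSWeight n k‖ + ∑ j ∈ univ.erase k, ‖bS n k j‖ * ‖bSWeight n j‖
      ≤ 14 / 5 * ‖bSWeight n k‖ := by
  have hrow := Fin.sum_erase_le_of_le_neighbors k (f := fun j => ‖bS n k j‖ * ‖bSWeight n j‖)
    (L := if (k : ℕ) = n - 1 then 1 else 1 / 2)
    (R := if (k : ℕ) = n - 1 then 0 else if (k : ℕ) = n - 2 then 5 / 4 else 1 / 2)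
    (by split_ifs <;> norm_num) (by split_ifs <;> norm_num) fun j hj => by
      simp only [bS, bSWeight, Real.norm_eq_abs, if_neg hj.symm]
      split_ifs <;> first | omega | norm_num
  simp only [bS, bSWeight, Real.norm_eq_abs] at hrow ⊢
  split_ifs at hrow ⊢ <;> first | omega | (norm_num at hrow ⊢; linarith)

theorem abs_le_of_mem_spectrum_bS {n : ℕ} {μ : ℝ} (hμ : μ ∈ spectrum ℝ (bS n)) :
    |μ| ≤ 14 / 5 := by
  simpa only [Real.norm_eq_abs] using norm_le_of_mem_spectrum_of_weighted_row_sum_le (bSWeight n)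
    (fun j => (bSWeight_pos n j).ne') (bS_weighted_row_sum_le n) hμ

theorem stmt13_general (n : ℕ) :
    specRad (bS n) < 3 ∧
    (∀ l : ℝ, 3 ≤ l → 0 < (l • (1 : Matrix (Fin n) (Fin n) ℝ) - bS n).det) := by
  constructor
  · calc specRad (bS n) ≤ 14 / 5 :=
          Real.sSup_le (fun r ⟨μ, hμ, hr⟩ => hr ▸ abs_le_of_mem_spectrum_bS
            (mem_spectrum_iff_det_smul_one_sub_eq_zero.mpr hμ)) (by norm_num)
      _ < 3 := by norm_num
  · intro l hl
    refine ((isHermitian_one.smul (IsSelfAdjoint.all l)).sub (bS_isHermitian n))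
      |>.det_pos_of_spectrum_pos fun ν hν => ?_
    rw [← Algebra.algebraMap_eq_smul_one, ← spectrum.singleton_sub_eq, Set.singleton_sub] at hν
    obtain ⟨μ, hμ, rfl⟩ := hν
    linarith [le_abs_self μ, abs_le_of_mem_spectrum_bS hμ]

/-- for every n ≥ 2, ρ(Bₙˢ) < 3; equivalently,
det(λ Iₙ − Bₙˢ) > 0 for every λ ≥ 3. -/
theorem stmt13 (n : ℕ) (hn : 2 ≤ n) :
    specRad (bS n) < 3 ∧
    (∀ l : ℝ, 3 ≤ l → 0 < (l • (1 : Matrix (Fin n) (Fin n) ℝ) - bS n).det) :=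
  stmt13_general n
end

section
/- For every n ≥ 2, the spectral radius of B_n^s satisfies ρ(B_n^s) > 2; in particular B_n^s has a real eigenvalue strictly greater than 2, equivalently det(2 I_n − B_n^s) < 0. -/
/-! `2 • 1 - B_n^s` is tridiagonal, so expanding its determinant `D n` along the first row gives
the recurrence `D (k + 3) = D (k + 2) - D (k + 1) / 4`, solved by `D (k + 1) = -2k / 2 ^ k`.
Hence the monic characteristic polynomial of `B_n^s` is negative at `2` for `n ≥ 2`, and by the
intermediate value theorem it has a root `μ > 2`; since `B_n^s` has finitely many eigenvalues,
`|μ|` is at most the spectral radius. -/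

open Matrix Real

namespace Matrix

variable {R : Type*} [CommRing R]

theorem det_succ_succ_of_sparse_row_col_zero {n : ℕ} (A : Matrix (Fin (n + 2)) (Fin (n + 2)) R)
    (hrow : ∀ j : Fin n, A 0 j.succ.succ = 0) (hcol : ∀ i : Fin n, A i.succ.succ 0 = 0) :
    A.det = A 0 0 * (A.submatrix Fin.succ Fin.succ).det -
      A 0 1 * A 1 0 * (A.submatrix (Fin.succ ∘ Fin.succ) (Fin.succ ∘ Fin.succ)).det := by
  have hminor : (A.submatrix Fin.succ (Fin.succ 0).succAbove).det =
      A 1 0 * (A.submatrix (Fin.succ ∘ Fin.succ) (Fin.succ ∘ Fin.succ)).det := by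
    rw [det_succ_column_zero, Fin.sum_univ_succ,
      Fintype.sum_eq_zero _ fun i => by simp [hcol i]]
    simp [Function.comp_def]
  rw [det_succ_row_zero, Fin.sum_univ_succ, Fin.sum_univ_succ,
    Fintype.sum_eq_zero _ fun j => by rw [hrow j, mul_zero, zero_mul], hminor]
  simp
  ring

theorem eval_charpoly_eq_det_smul_one_sub {m : Type*} [Fintype m] [DecidableEq m]
    (A : Matrix m m R) (t : R) : A.charpoly.eval t = (t • (1 : Matrix m m R) - A).det := by
  rw [eval_charpoly, scalar_apply, smul_one_eq_diagonal]

end Matrix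

theorem Polynomial.Monic.exists_isRoot_gt_of_eval_neg {p : Polynomial ℝ} (hp : p.Monic) {a : ℝ}
    (ha : p.eval a < 0) : ∃ x, a < x ∧ p.IsRoot x := by
  have hdeg : 0 < p.degree := hp.degree_pos.2 fun h => by simp [h] at ha; linarith
  obtain ⟨b, hb, hab⟩ := ((Polynomial.tendsto_atTop_of_leadingCoeff_nonneg p hdeg
    (by simp [hp.leadingCoeff])).eventually_gt_atTop 0 |>.and (Filter.eventually_ge_atTop a)).exists
  obtain ⟨x, hx, hx0⟩ := intermediate_value_Ioo hab p.continuous.continuousOn ⟨ha, hb⟩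
  exact ⟨x, hx.1, hx0⟩

theorem abs_le_specRad {n : ℕ} (A : Matrix (Fin n) (Fin n) ℝ) {μ : ℝ}
    (hμ : (μ • (1 : Matrix (Fin n) (Fin n) ℝ) - A).det = 0) : |μ| ≤ specRad A := by
  have hroots := Polynomial.finite_setOfPred_isRoot A.charpoly_monic.ne_zero
  have hbdd : BddAbove (eigenAbsSet A) := by
    refine (hroots.image abs).bddAbove.mono ?_
    rintro r ⟨ν, hν, rfl⟩
    exact ⟨ν, by rwa [Set.mem_ofPred_eq, Polynomial.IsRoot, eval_charpoly_eq_det_smul_one_sub], rfl⟩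
  exact le_csSup hbdd ⟨μ, hμ, rfl⟩

noncomputable def twoSubBS (n : ℕ) : Matrix (Fin n) (Fin n) ℝ :=
  (2 : ℝ) • 1 - bS n

theorem twoSubBS_apply {n : ℕ} (i j : Fin n) : twoSubBS n i j =
    if i = j then (if (i : ℕ) = n - 1 then 0 else 1)
    else if (i : ℕ) + 1 = j ∨ (j : ℕ) + 1 = i then
      (if (i : ℕ) = n - 1 ∨ (j : ℕ) = n - 1 then 1 else 1 / 2)
    else 0 := by
  simp only [twoSubBS, bS, Matrix.sub_apply, Matrix.smul_apply, one_apply, smul_eq_mul]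
  split_ifs <;> norm_num

theorem twoSubBS_apply_eq_zero {n : ℕ} {i j : Fin n} (h : (i : ℕ) + 1 < j ∨ (j : ℕ) + 1 < i) :
    twoSubBS n i j = 0 := by
  rw [twoSubBS_apply, if_neg (by grind), if_neg (by omega)]

theorem twoSubBS_submatrix_succ (n : ℕ) :
    (twoSubBS (n + 1)).submatrix Fin.succ Fin.succ = twoSubBS n := by
  ext i j
  simp only [submatrix_apply, twoSubBS_apply, Fin.val_succ, Fin.ext_iff]
  split_ifs <;> first | rfl | omega

theorem det_twoSubBS_add_three (n : ℕ) : (twoSubBS (n + 3)).det =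
    (twoSubBS (n + 2)).det - 1 / 4 * (twoSubBS (n + 1)).det := by
  rw [det_succ_succ_of_sparse_row_col_zero, ← submatrix_submatrix, twoSubBS_submatrix_succ,
    twoSubBS_submatrix_succ]
  · norm_num [twoSubBS_apply]
  all_goals exact fun k => twoSubBS_apply_eq_zero (by simp)

theorem det_twoSubBS_succ (n : ℕ) : (twoSubBS (n + 1)).det = -2 * n / 2 ^ n := by
  induction n using Nat.twoStepInduction with
  | zero => simp [det_unique, twoSubBS_apply]
  | one => simp [det_fin_two, twoSubBS_apply]
  | more n ih₀ ih₁ =>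
    rw [det_twoSubBS_add_three, ih₁, ih₀]
    push_cast
    field_simp
    ring

theorem det_twoSubBS_neg {n : ℕ} (hn : 2 ≤ n) : (twoSubBS n).det < 0 := by
  obtain ⟨m, rfl⟩ : ∃ m, n = m + 1 := ⟨n - 1, by omega⟩
  rw [det_twoSubBS_succ]
  have : (0 : ℝ) < m := Nat.cast_pos.2 (by omega)
  exact div_neg_of_neg_of_pos (by linarith) (by positivity)

/-- for every n ≥ 2, ρ(Bₙˢ) > 2; in particular Bₙˢ has a real
eigenvalue strictly greater than 2, equivalently det(2 Iₙ − Bₙˢ) < 0. -/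
theorem stmt14 (n : ℕ) (hn : 2 ≤ n) :
    2 < specRad (bS n) ∧
    (∃ μ : ℝ, (μ • (1 : Matrix (Fin n) (Fin n) ℝ) - bS n).det = 0 ∧ 2 < μ) ∧
    ((2 : ℝ) • (1 : Matrix (Fin n) (Fin n) ℝ) - bS n).det < 0 := by
  have hdet := det_twoSubBS_neg hn
  obtain ⟨μ, hμ2, hμ⟩ := (bS n).charpoly_monic.exists_isRoot_gt_of_eval_neg
    (a := 2) (by rwa [eval_charpoly_eq_det_smul_one_sub])
  rw [Polynomial.IsRoot, eval_charpoly_eq_det_smul_one_sub] at hμ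
  exact ⟨hμ2.trans_le ((le_abs_self μ).trans (abs_le_specRad _ hμ)), ⟨μ, hμ, hμ2⟩, hdet⟩
end
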